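/- Let γ1, γ2 ∈ (0,1), let τ be a transition function on (S, A) that is non-trivial, assume every state is reachable in the environment (S, A, τ, ι, γ2), and let X be any type. Suppose f : ℛ → X satisfies f(R1) = f(R2) whenever R2 is a potential shaping of R1 with discount γ1. If γ1 ≠ γ2, then f is not ≡_OPT-admissible, where ≡_OPT is the equivalence relation of having the same optimal policies in the environment (S, A, τ, ι, γ2). -/

import Mathlib

open scoped BigOperators

/-- A probability vector on a finite type. -/
def IsProbVec {X : Type} [Fintype X] (p : X → ℝ) : Prop :=
  (∀ x, 0 ≤ p x) ∧ ∑ x, p x = 1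

/-- A (stationary) policy: a probability vector over actions for each state. -/
def Policy (S A : Type) [Fintype A] : Type :=
  {p : S → A → ℝ // ∀ s, IsProbVec (p s)}

/-- The transition matrix `P_π` induced by a policy `π` under transition function `τ`. -/
noncomputable def Pmat {S A : Type} [Fintype S] [Fintype A]
    (τ : S → A → S → ℝ) (π : Policy S A) : Matrix S S ℝ :=
  Matrix.of fun s s' => ∑ a, π.1 s a * τ s a s'

/-- The state distribution `ι P_π^t` at time `t`. -/
noncomputable def stateDist {S A : Type} [Fintype S] [DecidableEq S] [Fintype A]
    (τ : S → A → S → ℝ) (ι : S → ℝ) (π : Policy S A) (t : ℕ) : S → ℝ :=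
  Matrix.vecMul ι (Pmat τ π ^ t)

/-- The expected one-step reward `r_{R,π}`. -/
noncomputable def rvec {S A : Type} [Fintype S] [Fintype A]
    (τ : S → A → S → ℝ) (R : S → A → S → ℝ) (π : Policy S A) (s : S) : ℝ :=
  ∑ a, π.1 s a * ∑ s', τ s a s' * R s a s'

/-- The policy evaluation function `J_R(π)`. -/
noncomputable def Jval {S A : Type} [Fintype S] [DecidableEq S] [Fintype A]
    (τ : S → A → S → ℝ) (ι : S → ℝ) (γ : ℝ) (R : S → A → S → ℝ)
    (π : Policy S A) : ℝ :=
  ∑' t : ℕ, γ ^ t * ∑ s, stateDist τ ι π t s * rvec τ R π s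

/-- Every state is reachable under `τ` and `ι`. -/
def AllReachable {S A : Type} [Fintype S] [DecidableEq S] [Fintype A]
    (τ : S → A → S → ℝ) (ι : S → ℝ) : Prop :=
  ∀ s : S, ∃ (π : Policy S A) (t : ℕ), 0 < stateDist τ ι π t s

/-- `π` is an optimal policy for `R`. -/
def IsOptimal {S A : Type} [Fintype S] [DecidableEq S] [Fintype A]
    (τ : S → A → S → ℝ) (ι : S → ℝ) (γ : ℝ) (R : S → A → S → ℝ)
    (π : Policy S A) : Prop :=
  ∀ π' : Policy S A, Jval τ ι γ R π' ≤ Jval τ ι γ R π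

/-- `R₁ ≡_OPT R₂`: the same policies are optimal for `R₁` and `R₂`. -/
def EquivOPT {S A : Type} [Fintype S] [DecidableEq S] [Fintype A]
    (τ : S → A → S → ℝ) (ι : S → ℝ) (γ : ℝ) (R₁ R₂ : S → A → S → ℝ) : Prop :=
  ∀ π : Policy S A, IsOptimal τ ι γ R₁ π ↔ IsOptimal τ ι γ R₂ π

/-- `R₁ ≡_ORD R₂`: `R₁` and `R₂` induce the same ordering of policies. -/
def EquivORD {S A : Type} [Fintype S] [DecidableEq S] [Fintype A]
    (τ : S → A → S → ℝ) (ι : S → ℝ) (γ : ℝ) (R₁ R₂ : S → A → S → ℝ) : Prop :=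
  ∀ π π' : Policy S A,
    (Jval τ ι γ R₁ π' < Jval τ ι γ R₁ π ↔ Jval τ ι γ R₂ π' < Jval τ ι γ R₂ π)

/-- `f` is `P`-admissible: `f R₁ = f R₂` implies `P R₁ R₂`. -/
def PAdmissible {R : Type*} {X : Type*} (P : R → R → Prop) (f : R → X) : Prop :=
  ∀ R₁ R₂ : R, f R₁ = f R₂ → P R₁ R₂

/-- `f` is `P`-robust to misspecification with `g`. -/
def PRobust {R : Type*} {X : Type*} (P : R → R → Prop) (f g : R → X) : Prop :=
  PAdmissible P f ∧ f ≠ g ∧ Set.range g ⊆ Set.range f ∧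
    ∀ R₁ R₂ : R, f R₁ = g R₂ → P R₁ R₂

/-- `R₂` is an S'-redistribution of `R₁` with respect to `τ`. -/
def SRedistrib {S A : Type} [Fintype S] [Fintype A]
    (τ : S → A → S → ℝ) (R₁ R₂ : S → A → S → ℝ) : Prop :=
  ∀ s a, ∑ s', τ s a s' * R₁ s a s' = ∑ s', τ s a s' * R₂ s a s'

/-- `R₂` is a potential shaping of `R₁` with discount `γ'`. -/
def PotentialShaping {S A : Type} (γ' : ℝ) (R₁ R₂ : S → A → S → ℝ) : Prop :=
  ∃ Φ : S → ℝ, ∀ s a s', R₂ s a s' = R₁ s a s' + γ' * Φ s' - Φ s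

/-! If `f` is `≡_OPT`-admissible, the shapings `γ₁ Φ(s') - Φ(s)` of the zero reward, which `f`
cannot tell apart from it, make every policy optimal, so their value does not depend on the
policy. With the `γ₂`-discounted occupancy `d_π = ∑ₜ γ₂ᵗ ι P_πᵗ`, which satisfies the flow equation
`d_π = ι + γ₂ d_π P_π`, this value is `((γ₁ - γ₂) ⟨d_π, Φ⟩ - γ₁ ⟨ι, Φ⟩) / γ₂`; as `γ₁ ≠ γ₂`,
`d_π` would not depend on `π` either. But take policies that differ only at a reachable state
`s₀`, where they play actions `a`, `a'` with `τ(s₀, a) ≠ τ(s₀, a')`: their common occupancy `d`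
would satisfy both flow equations, forcing `d(s₀) (τ(s₀, a) - τ(s₀, a')) = 0` with `d(s₀) > 0`. -/

open Matrix

section
variable {S A : Type} [Fintype S] [Fintype A]

lemma rvec_potential {τ : S → A → S → ℝ} (hτ : ∀ s a, IsProbVec (τ s a)) (c : ℝ) (Φ : S → ℝ)
    (π : Policy S A) :
    rvec τ (fun s _ s' => c * Φ s' - Φ s) π = c • (Pmat τ π *ᵥ Φ) - Φ := by
  funext s
  have hτΦ : ∀ a, ∑ s', τ s a s' * (c * Φ s' - Φ s) = c * ∑ s', τ s a s' * Φ s' - Φ s := by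
    intro a
    simp only [mul_sub, Finset.sum_sub_distrib, ← Finset.sum_mul, (hτ s a).2, one_mul,
      Finset.mul_sum, mul_left_comm]
  simp only [rvec, hτΦ]
  simp only [mul_sub, Finset.sum_sub_distrib, ← Finset.sum_mul, (π.2 s).2, one_mul, Pi.sub_apply,
    Pi.smul_apply, smul_eq_mul, mulVec, dotProduct, Pmat, of_apply]
  simp only [Finset.mul_sum, Finset.sum_mul]
  rw [Finset.sum_comm]
  simp only [mul_left_comm, mul_assoc]

variable [DecidableEq S]

lemma Pmat_mem_rowStochastic {τ : S → A → S → ℝ} (hτ : ∀ s a, IsProbVec (τ s a))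
    (π : Policy S A) : Pmat τ π ∈ rowStochastic ℝ S := by
  refine mem_rowStochastic_iff_sum.2 ⟨fun s s' => Finset.sum_nonneg fun a _ =>
    mul_nonneg ((π.2 s).1 a) ((hτ s a).1 s'), fun s => ?_⟩
  simp only [Pmat, of_apply]
  rw [Finset.sum_comm]
  simp [← Finset.mul_sum, (hτ _ _).2, (π.2 s).2]

variable (τ : S → A → S → ℝ) (ι : S → ℝ)

lemma stateDist_succ (π : Policy S A) (t : ℕ) :
    stateDist τ ι π (t + 1) = stateDist τ ι π t ᵥ* Pmat τ π := by
  simp only [stateDist, pow_succ, vecMul_vecMul]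

lemma stateDist_nonneg (hτ : ∀ s a, IsProbVec (τ s a)) (hι : IsProbVec ι) (π : Policy S A)
    (t : ℕ) (s : S) : 0 ≤ stateDist τ ι π t s :=
  nonneg_vecMul_of_mem_rowStochastic (pow_mem (Pmat_mem_rowStochastic hτ π) t) hι.1 s

lemma stateDist_le_one (hτ : ∀ s a, IsProbVec (τ s a)) (hι : IsProbVec ι) (π : Policy S A)
    (t : ℕ) (s : S) : stateDist τ ι π t s ≤ 1 := by
  have hsum : ∑ s, stateDist τ ι π t s = 1 := by
    simpa [dotProduct, stateDist] using vecMul_dotProduct_one_eq_one_rowStochastic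
      (pow_mem (Pmat_mem_rowStochastic hτ π) t) (by simpa [dotProduct] using hι.2)
  exact hsum ▸ Finset.single_le_sum (fun s _ => stateDist_nonneg τ ι hτ hι π t s)
    (Finset.mem_univ s)

noncomputable def occupancy (γ : ℝ) (π : Policy S A) (s : S) : ℝ :=
  ∑' t : ℕ, γ ^ t * stateDist τ ι π t s

variable {τ ι} {γ : ℝ}

lemma summable_discounted_stateDist (hτ : ∀ s a, IsProbVec (τ s a)) (hι : IsProbVec ι)
    (hγ0 : 0 ≤ γ) (hγ1 : γ < 1) (π : Policy S A) (s : S) :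
    Summable fun t : ℕ => γ ^ t * stateDist τ ι π t s :=
  (summable_geometric_of_lt_one hγ0 hγ1).of_nonneg_of_le
    (fun t => mul_nonneg (pow_nonneg hγ0 t) (stateDist_nonneg τ ι hτ hι π t s))
    (fun t => mul_le_of_le_one_right (pow_nonneg hγ0 t) (stateDist_le_one τ ι hτ hι π t s))

lemma occupancy_pos (hτ : ∀ s a, IsProbVec (τ s a)) (hι : IsProbVec ι)
    (hγ0 : 0 < γ) (hγ1 : γ < 1) {π : Policy S A} {s : S} {t : ℕ}
    (ht : 0 < stateDist τ ι π t s) : 0 < occupancy τ ι γ π s :=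
  (summable_discounted_stateDist hτ hι hγ0.le hγ1 π s).tsum_pos
    (fun t => mul_nonneg (pow_nonneg hγ0.le t) (stateDist_nonneg τ ι hτ hι π t s)) t
    (mul_pos (pow_pos hγ0 t) ht)

lemma occupancy_eq_add_smul_vecMul (hτ : ∀ s a, IsProbVec (τ s a)) (hι : IsProbVec ι)
    (hγ0 : 0 ≤ γ) (hγ1 : γ < 1) (π : Policy S A) :
    occupancy τ ι γ π = ι + γ • (occupancy τ ι γ π ᵥ* Pmat τ π) := by
  funext s'
  have hsum := summable_discounted_stateDist hτ hι hγ0 hγ1 π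
  rw [occupancy, (hsum s').tsum_eq_zero_add]
  have hstep : ∀ t : ℕ, γ ^ (t + 1) * stateDist τ ι π (t + 1) s'
      = γ * ∑ s, γ ^ t * stateDist τ ι π t s * Pmat τ π s s' := by
    intro t
    simp only [stateDist_succ, vecMul, dotProduct, Finset.mul_sum]
    exact Finset.sum_congr rfl fun s _ => by ring
  simp only [hstep, tsum_mul_left, Pi.add_apply, Pi.smul_apply, smul_eq_mul, vecMul, dotProduct,
    occupancy, ← tsum_mul_right]
  rw [Summable.tsum_finsetSum fun s _ => (hsum s).mul_right _]
  simp [stateDist]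

lemma Jval_eq_occupancy_dotProduct (hτ : ∀ s a, IsProbVec (τ s a)) (hι : IsProbVec ι)
    (hγ0 : 0 ≤ γ) (hγ1 : γ < 1) (R : S → A → S → ℝ) (π : Policy S A) :
    Jval τ ι γ R π = occupancy τ ι γ π ⬝ᵥ rvec τ R π := by
  simp only [Jval, occupancy, dotProduct, ← tsum_mul_right, Finset.mul_sum, mul_assoc]
  exact Summable.tsum_finsetSum fun s _ => by
    simpa only [mul_assoc] using
      (summable_discounted_stateDist hτ hι hγ0 hγ1 π s).mul_right (rvec τ R π s)

lemma mul_Jval_potential (hτ : ∀ s a, IsProbVec (τ s a)) (hι : IsProbVec ι)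
    (hγ0 : 0 ≤ γ) (hγ1 : γ < 1) (c : ℝ) (Φ : S → ℝ) (π : Policy S A) :
    γ * Jval τ ι γ (fun s _ s' => c * Φ s' - Φ s) π
      = (c - γ) * (occupancy τ ι γ π ⬝ᵥ Φ) - c * (ι ⬝ᵥ Φ) := by
  have hflow : γ • (occupancy τ ι γ π ᵥ* Pmat τ π) = occupancy τ ι γ π - ι := by
    rw [eq_sub_iff_add_eq', ← occupancy_eq_add_smul_vecMul hτ hι hγ0 hγ1]
  rw [Jval_eq_occupancy_dotProduct hτ hι hγ0 hγ1, rvec_potential hτ, dotProduct_sub,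
    dotProduct_smul, dotProduct_mulVec, smul_eq_mul]
  have := congrArg (· ⬝ᵥ Φ) hflow
  simp only [smul_dotProduct, sub_dotProduct, smul_eq_mul] at this
  linear_combination c * this

lemma occupancy_eq_of_forall_Jval_potential_eq (hτ : ∀ s a, IsProbVec (τ s a))
    (hι : IsProbVec ι) (hγ0 : 0 ≤ γ) (hγ1 : γ < 1) {c : ℝ} (hc : c ≠ γ) {π π' : Policy S A}
    (h : ∀ Φ : S → ℝ, Jval τ ι γ (fun s _ s' => c * Φ s' - Φ s) π
      = Jval τ ι γ (fun s _ s' => c * Φ s' - Φ s) π') :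
    occupancy τ ι γ π = occupancy τ ι γ π' := by
  funext s
  have hs := congrArg (γ * ·) (h (Pi.single s 1))
  simp only [mul_Jval_potential hτ hι hγ0 hγ1, dotProduct_single_one] at hs
  exact mul_left_cancel₀ (sub_ne_zero.2 hc) (by linarith)

noncomputable def Policy.update [DecidableEq A] (π : Policy S A) (s₀ : S) (a : A) :
    Policy S A :=
  ⟨Function.update π.1 s₀ (Pi.single a 1), fun s => by
    rcases eq_or_ne s s₀ with rfl | hs
    · rw [Function.update_self]
      exact single_mem_stdSimplex ℝ a
    · simpa [hs] using π.2 s⟩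

lemma vecMul_Pmat_update_sub [DecidableEq A] (v : S → ℝ)
    (π : Policy S A) (s₀ : S) (a a' : A) :
    v ᵥ* Pmat τ (π.update s₀ a) - v ᵥ* Pmat τ (π.update s₀ a') = v s₀ • (τ s₀ a - τ s₀ a') := by
  funext s₁
  simp only [Pi.sub_apply, vecMul, dotProduct, ← Finset.sum_sub_distrib, ← mul_sub]
  rw [Finset.sum_eq_single s₀]
  · simp [Pmat, Policy.update, Pi.single_apply]
  · intro s _ hs
    simp [Pmat, Policy.update, hs]
  · simp

lemma exists_occupancy_ne (hτ : ∀ s a, IsProbVec (τ s a)) (hι : IsProbVec ι)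
    (hγ0 : 0 < γ) (hγ1 : γ < 1) (hnt : ∃ (s : S) (a a' : A), τ s a ≠ τ s a')
    (hreach : AllReachable τ ι) :
    ∃ π π' : Policy S A, occupancy τ ι γ π ≠ occupancy τ ι γ π' := by
  classical
  by_contra! hall
  obtain ⟨s₀, a, a', hne⟩ := hnt
  obtain ⟨π, t, hpos⟩ := hreach s₀
  have hflow : ∀ b, ι + γ • (occupancy τ ι γ π ᵥ* Pmat τ (π.update s₀ b))
      = occupancy τ ι γ π := fun b => by
    rw [hall π (π.update s₀ b)]
    exact (occupancy_eq_add_smul_vecMul hτ hι hγ0.le hγ1 _).symm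
  have hzero : occupancy τ ι γ π s₀ • (τ s₀ a - τ s₀ a') = 0 := by
    rw [← vecMul_Pmat_update_sub, sub_eq_zero]
    exact smul_right_injective _ hγ0.ne' (add_left_cancel ((hflow a).trans (hflow a').symm))
  rcases smul_eq_zero.1 hzero with h | h
  · exact (occupancy_pos hτ hι hγ0 hγ1 hpos).ne' h
  · exact hne (sub_eq_zero.1 h)

lemma Jval_eq_of_equivOPT_zero {R : S → A → S → ℝ}
    (h : EquivOPT τ ι γ (fun _ _ _ => 0) R) (π π' : Policy S A) :
    Jval τ ι γ R π = Jval τ ι γ R π' := by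
  have hopt : ∀ ρ, IsOptimal τ ι γ R ρ := fun ρ => (h ρ).1 fun ρ' => by simp [Jval, rvec]
  exact le_antisymm (hopt π' π) (hopt π π')

end

theorem stmt_17_general {S A : Type} [Fintype S] [DecidableEq S] [Fintype A]
    (γ₁ γ₂ : ℝ) (hγ₂0 : 0 < γ₂) (hγ₂1 : γ₂ < 1)
    (τ : S → A → S → ℝ) (hτ : ∀ s a, IsProbVec (τ s a))
    (hnt : ∃ (s : S) (a a' : A), τ s a ≠ τ s a')
    (ι : S → ℝ) (hι : IsProbVec ι)
    (hreach : AllReachable τ ι)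
    {X : Type} (f : (S → A → S → ℝ) → X)
    (hf : ∀ R₁ R₂ : S → A → S → ℝ, PotentialShaping γ₁ R₁ R₂ → f R₁ = f R₂)
    (hne : γ₁ ≠ γ₂) :
    ¬ PAdmissible (EquivOPT τ ι γ₂) f := by
  intro hadm
  obtain ⟨π, π', hocc⟩ := exists_occupancy_ne hτ hι hγ₂0 hγ₂1 hnt hreach
  refine hocc (occupancy_eq_of_forall_Jval_potential_eq hτ hι hγ₂0.le hγ₂1 hne fun Φ => ?_)
  have hshaping : PotentialShaping γ₁ (fun (_ : S) (_ : A) (_ : S) => 0)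
      fun s _ s' => γ₁ * Φ s' - Φ s :=
    ⟨Φ, fun _ _ _ => by ring⟩
  exact Jval_eq_of_equivOPT_zero (hadm _ _ (hf _ _ hshaping)) π π'

theorem stmt_17 {S A : Type} [Fintype S] [DecidableEq S] [Fintype A]
    [Nonempty S] [Nonempty A]
    (γ₁ γ₂ : ℝ) (hγ₁0 : 0 < γ₁) (hγ₁1 : γ₁ < 1) (hγ₂0 : 0 < γ₂) (hγ₂1 : γ₂ < 1)
    (τ : S → A → S → ℝ) (hτ : ∀ s a, IsProbVec (τ s a))
    (hnt : ∃ (s : S) (a a' : A), τ s a ≠ τ s a')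
    (ι : S → ℝ) (hι : IsProbVec ι)
    (hreach : AllReachable τ ι)
    {X : Type} (f : (S → A → S → ℝ) → X)
    (hf : ∀ R₁ R₂ : S → A → S → ℝ, PotentialShaping γ₁ R₁ R₂ → f R₁ = f R₂)
    (hne : γ₁ ≠ γ₂) :
    ¬ PAdmissible (EquivOPT τ ι γ₂) f :=
  stmt_17_general γ₁ γ₂ hγ₂0 hγ₂1 τ hτ hnt ι hι hreach f hf hne
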